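/- Let A be a right regular ring (in the sense of Vogel) and let n be a natural number. Then the group ring A[ℤⁿ] of the free abelian group ℤⁿ over A is right regular. -/

import Mathlib

universe u

open CategoryTheory CategoryTheory.Limits

/-- A class of `R`-modules is stable under filtered colimits if, for every
filtered diagram of modules all of whose objects belong to the class, the
colimit (i.e. the point of any colimit cocone) again belongs to the class. -/
def StableUnderFilteredColimits (R : Type u) [Ring R] (S : Set (ModuleCat.{u} R)) : Prop :=
  ∀ (J : Type u) (_ : SmallCategory J) (_ : IsFiltered J)
    (F : J ⥤ ModuleCat.{u} R) (c : Cocone F), IsColimit c →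
    (∀ j : J, F.obj j ∈ S) → c.pt ∈ S

/-- The 2/3 axiom: for every short exact sequence `0 → M → N → P → 0`, if two of the
three modules belong to the class, then so does the third. -/
def SatisfiesTwoOfThree (R : Type u) [Ring R] (S : Set (ModuleCat.{u} R)) : Prop :=
  ∀ (M N P : ModuleCat.{u} R) (f : M →ₗ[R] N) (g : N →ₗ[R] P),
    Function.Injective f → Function.Surjective g → Function.Exact f g →
      ((M ∈ S → N ∈ S → P ∈ S) ∧ (M ∈ S → P ∈ S → N ∈ S) ∧ (N ∈ S → P ∈ S → M ∈ S))

/-- A class of `R`-modules is exact if it is stable under filtered colimits and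
satisfies the 2/3 axiom. -/
def IsExactClass (R : Type u) [Ring R] (S : Set (ModuleCat.{u} R)) : Prop :=
  StableUnderFilteredColimits R S ∧ SatisfiesTwoOfThree R S

/-- An `R`-module is regular (in the sense of Vogel) if it belongs to every exact class
containing the module `R` itself (i.e. to the smallest such class). -/
def IsRegularModule (R : Type u) [Ring R] (M : ModuleCat.{u} R) : Prop :=
  ∀ S : Set (ModuleCat.{u} R), IsExactClass R S → ModuleCat.of R R ∈ S → M ∈ S

/-- A ring `R` is regular in the sense of Vogel if every `R`-module is regular,
i.e. every exact class of `R`-modules containing `R` contains all `R`-modules. -/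
def IsVogelRegular (R : Type u) [Ring R] : Prop :=
  ∀ M : ModuleCat.{u} R, IsRegularModule R M

/-- A ring is right regular (in the sense of Vogel) if the opposite ring is regular for
left modules, i.e. the category of right `R`-modules (= left `Rᵐᵒᵖ`-modules) has the
Vogel regularity property. -/
def IsVogelRightRegular (R : Type u) [Ring R] : Prop := IsVogelRegular Rᵐᵒᵖ

/-- A module is flat iff it is a filtered colimit of finitely generated free modules
(Lazard's theorem); we take this characterization as the definition of flatness,
which makes sense over an arbitrary (possibly non-commutative) ring. -/
def IsLazardFlat (R : Type u) [Ring R] (M : Type u) [AddCommGroup M] [Module R M] : Prop :=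
  ∃ (J : Type u) (_ : SmallCategory J) (_ : IsFiltered J)
    (F : J ⥤ ModuleCat.{u} R) (c : Cocone F) (_ : IsColimit c),
    (∀ j : J, ∃ n : ℕ, Nonempty ((F.obj j) ≃ₗ[R] (Fin n → R))) ∧
    Nonempty (c.pt ≃ₗ[R] M)

/-!
Regularity is invariant under ring isomorphisms, `A[ℤⁿ]ᵐᵒᵖ ≅ Aᵐᵒᵖ[ℤⁿ]` and
`R[ℤⁿ⁺¹] ≅ R[ℤⁿ][T, T⁻¹]`, so it suffices to show that `R[T, T⁻¹]` is regular whenever `R` is.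
The induction functor `M ↦ R[T, T⁻¹] ⊗_R M` is exact and left adjoint to restriction of scalars,
hence preserves filtered colimits. So for an exact class `𝒮` of `R[T, T⁻¹]`-modules containing
`R[T, T⁻¹] = R[T, T⁻¹] ⊗_R R`, the `R`-modules `M` with `R[T, T⁻¹] ⊗_R M ∈ 𝒮` form an exact class
containing `R`, hence all of them. Finally every `R[T, T⁻¹]`-module `N` sits in the short exact
sequence `0 → R[T, T⁻¹] ⊗_R N → R[T, T⁻¹] ⊗_R N → N → 0` whose first map is `T ⊗ 1 - 1 ⊗ T`,
so `N ∈ 𝒮` by the 2/3 axiom.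
-/

open Function

theorem Function.Exact.finsupp_mapRange {ι M N P : Type*} [AddCommMonoid M] [AddCommMonoid N]
    [AddCommMonoid P] {f : M →+ N} {g : N →+ P} (h : Exact f g) :
    Exact (Finsupp.mapRange.addMonoidHom f : (ι →₀ M) →+ ι →₀ N)
      (Finsupp.mapRange.addMonoidHom g) := by
  intro y
  constructor
  · intro hy
    have hmem : ∀ a, Finsupp.single a (y a) ∈
        AddMonoidHom.mrange (Finsupp.mapRange.addMonoidHom f) := fun a => by
      obtain ⟨x, hx⟩ := (h (y a)).1 (by simpa using DFunLike.congr_fun hy a)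
      exact ⟨Finsupp.single a x, by simp [hx]⟩
    exact y.sum_single ▸ AddSubmonoidClass.finsuppSum_mem _ _ _ fun a _ => hmem a
  · rintro ⟨x, rfl⟩
    ext a
    simp [h.apply_apply_eq_zero]

section ExactClass

variable {R : Type u} [Ring R] {𝒮 : Set (ModuleCat.{u} R)}

theorem SatisfiesTwoOfThree.punit_mem (h : SatisfiesTwoOfThree R 𝒮) {X : ModuleCat.{u} R}
    (hX : X ∈ 𝒮) : ModuleCat.of R PUnit ∈ 𝒮 :=
  (h X X _ LinearMap.id 0 injective_id (fun _ => ⟨0, rfl⟩)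
    (fun y => ⟨fun _ => ⟨y, rfl⟩, fun _ => rfl⟩)).1 hX hX

theorem SatisfiesTwoOfThree.mem_of_linearEquiv (h : SatisfiesTwoOfThree R 𝒮)
    {X Y : ModuleCat.{u} R} (e : X ≃ₗ[R] Y) (hX : X ∈ 𝒮) : Y ∈ 𝒮 :=
  (h X Y (ModuleCat.of R PUnit) e 0 e.injective (fun _ => ⟨0, rfl⟩)
    (fun y => ⟨fun _ => ⟨e.symm y, e.apply_symm_apply y⟩, fun _ => rfl⟩)).2.1 hX (h.punit_mem hX)

/-- Exactness of a functor, in the concrete form in which the 2/3 axiom is stated. -/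
def PreservesShortExact {S : Type u} [Ring S] (F : ModuleCat.{u} R ⥤ ModuleCat.{u} S) : Prop :=
  ∀ ⦃M N P : ModuleCat.{u} R⦄ (f : M ⟶ N) (g : N ⟶ P), Injective f → Surjective g → Exact f g →
    Injective (F.map f) ∧ Surjective (F.map g) ∧ Exact (F.map f) (F.map g)

variable {S : Type u} [Ring S] {𝒯 : Set (ModuleCat.{u} S)}

theorem IsExactClass.preimage (h : IsExactClass S 𝒯) (F : ModuleCat.{u} R ⥤ ModuleCat.{u} S)
    [PreservesFilteredColimits F] (hF : PreservesShortExact F) : IsExactClass R (F.obj ⁻¹' 𝒯) :=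
  ⟨fun J _ _ D c hc hD => h.1 J _ ‹_› (D ⋙ F) (F.mapCocone c) (isColimitOfPreserves F hc) hD,
    fun _ _ _ f g hf hg hfg =>
      let ⟨hf', hg', hfg'⟩ := hF (ModuleCat.ofHom f) (ModuleCat.ofHom g) hf hg hfg
      h.2 _ _ _ _ _ hf' hg' hfg'⟩

theorem IsVogelRegular.obj_mem (hR : IsVogelRegular R) (h : IsExactClass S 𝒯)
    (F : ModuleCat.{u} R ⥤ ModuleCat.{u} S) [PreservesFilteredColimits F]
    (hF : PreservesShortExact F) (hFR : F.obj (ModuleCat.of R R) ∈ 𝒯) (M : ModuleCat.{u} R) :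
    F.obj M ∈ 𝒯 :=
  hR M _ (h.preimage F hF) hFR

theorem IsVogelRegular.of_ringEquiv (e : R ≃+* S) (hR : IsVogelRegular R) : IsVogelRegular S := by
  intro N 𝒯 h𝒯 hS
  let F := ModuleCat.restrictScalars.{u} e.symm.toRingHom
  have hFR : F.obj (ModuleCat.of R R) ∈ 𝒯 :=
    h𝒯.2.mem_of_linearEquiv (ModuleCat.restrictScalarsIsoOfEquiv e.symm).symm.toLinearEquiv hS
  have hF : PreservesShortExact F := fun _ _ _ _ _ hf hg hfg => ⟨hf, hg, hfg⟩
  exact h𝒯.2.mem_of_linearEquiv (F.objObjPreimageIso N).toLinearEquiv (hR.obj_mem h𝒯 F hF hFR _)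

end ExactClass

/-- The induced module `R[G] ⊗_R M`, realised as `G →₀ M`. -/
def InducedModule (_R : Type u) (G : Type) (M : Type u) [Zero M] : Type u := G →₀ M

noncomputable section

namespace InducedModule

variable {R : Type u} {G : Type} {M : Type u} [AddCommGroup M]

instance : AddCommGroup (InducedModule R G M) := inferInstanceAs (AddCommGroup (G →₀ M))

def ofFinsupp : (G →₀ M) ≃+ InducedModule R G M := AddEquiv.refl _

def single (g : G) (m : M) : InducedModule R G M := ofFinsupp (Finsupp.single g m)

@[simp]
theorem ofFinsupp_single (g : G) (m : M) :
    (ofFinsupp (Finsupp.single g m) : InducedModule R G M) = single g m := rfl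

@[simp]
theorem ofFinsupp_symm_single (g : G) (m : M) :
    ofFinsupp.symm (single g m : InducedModule R G M) = Finsupp.single g m := rfl

theorem single_add (g : G) (m m' : M) :
    (single g (m + m') : InducedModule R G M) = single g m + single g m' :=
  congrArg ofFinsupp (Finsupp.single_add g m m')

@[elab_as_elim]
theorem induction_on {motive : InducedModule R G M → Prop} (x : InducedModule R G M)
    (zero : motive 0) (add : ∀ x y, motive x → motive y → motive (x + y))
    (single : ∀ g m, motive (single g m)) : motive x :=
  Finsupp.induction_linear (motive := fun f => motive (ofFinsupp f)) (ofFinsupp.symm x)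
    zero add single

variable (R G M) [Ring R] [AddMonoid G] [Module R M]

def translate : Multiplicative G →* AddMonoid.End (G →₀ M) where
  toFun g := Finsupp.mapDomain.addMonoidHom (g.toAdd + ·)
  map_one' := Finsupp.addHom_ext fun j m => by
    change Finsupp.mapDomain _ (Finsupp.single j m) = Finsupp.single j m
    simp
  map_mul' g h := Finsupp.addHom_ext fun j m => by
    change _ = Finsupp.mapDomain _ (Finsupp.mapDomain _ (Finsupp.single j m))
    simp [add_assoc]

def actionHom : AddMonoidAlgebra R G →+* AddMonoid.End (G →₀ M) :=
  AddMonoidAlgebra.liftNCRingHom (Module.toAddMonoidEnd R (G →₀ M)) (translate G M)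
    (fun r _ => show Commute _ _ from AddMonoidHom.ext fun x => (Finsupp.mapDomain_smul r x).symm)

instance : Module (AddMonoidAlgebra R G) (InducedModule R G M) :=
  Module.compHom (G →₀ M) (actionHom R G M)

variable {R G M}

theorem single_smul_single (g : G) (r : R) (h : G) (m : M) :
    (AddMonoidAlgebra.single g r : AddMonoidAlgebra R G) • single h m =
      (single (g + h) (r • m) : InducedModule R G M) := by
  change actionHom R G M (.single g r) (Finsupp.single h m) = Finsupp.single (g + h) (r • m)
  rw [actionHom, AddMonoidAlgebra.liftNCRingHom_single]
  change r • Finsupp.mapDomain _ (Finsupp.single h m) = _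
  simp

theorem single_eq_smul (g : G) (m : M) :
    (single g m : InducedModule R G M) =
      (AddMonoidAlgebra.single g 1 : AddMonoidAlgebra R G) • single 0 m := by
  rw [single_smul_single, add_zero, one_smul]

theorem ofFinsupp_symm_single_one_smul {G : Type} [AddGroup G] (g : G)
    (x : InducedModule R G M) (a : G) :
    ofFinsupp.symm ((AddMonoidAlgebra.single g 1 : AddMonoidAlgebra R G) • x) a =
      ofFinsupp.symm x (-g + a) := by
  change actionHom R G M (.single g 1) (ofFinsupp.symm x) a = _
  rw [actionHom, AddMonoidAlgebra.liftNCRingHom_single]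
  change ((1 : R) • Finsupp.mapDomain (g + ·) (ofFinsupp.symm x)) a = _
  rw [one_smul]
  simpa using Finsupp.mapDomain_apply (add_right_injective g) (ofFinsupp.symm x) (-g + a)

section LinearMaps

variable {N : Type u} [AddCommGroup N] [Module (AddMonoidAlgebra R G) N]

def mkLinearMap (φ : InducedModule R G M →+ N)
    (hφ : ∀ g r h m, φ (single (g + h) (r • m)) =
      (AddMonoidAlgebra.single g r : AddMonoidAlgebra R G) • φ (single h m)) :
    InducedModule R G M →ₗ[AddMonoidAlgebra R G] N where
  __ := φ
  map_smul' p x := by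
    induction p using AddMonoidAlgebra.induction_linear with
    | zero => simp
    | add p q hp hq => simp_all [add_smul]
    | single g r =>
      induction x using induction_on with
      | zero => simp
      | add x y hx hy => simp_all
      | single h m => simpa [single_smul_single] using hφ g r h m

@[ext]
theorem linearMap_ext {φ ψ : InducedModule R G M →ₗ[AddMonoidAlgebra R G] N}
    (h : ∀ m, φ (single 0 m) = ψ (single 0 m)) : φ = ψ :=
  LinearMap.ext fun x => by
    induction x using induction_on with
    | zero => simp
    | add x y hx hy => simp_all
    | single g m => rw [single_eq_smul, map_smul, map_smul, h]

end LinearMaps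

local notation "ι" => (AddMonoidAlgebra.singleZeroRingHom : R →+* AddMonoidAlgebra R G)

def lift {N : ModuleCat.{u} (AddMonoidAlgebra R G)}
    (f : M →ₗ[R] (ModuleCat.restrictScalars ι).obj N) :
    InducedModule R G M →ₗ[AddMonoidAlgebra R G] N :=
  mkLinearMap ((Finsupp.liftAddHom fun g =>
      (DistribSMul.toAddMonoidHom N (AddMonoidAlgebra.single g (1 : R))).comp f.toAddMonoidHom).comp
        ofFinsupp.symm.toAddMonoidHom)
    (fun g r h m => by
      simp only [AddMonoidHom.comp_apply, AddEquiv.coe_toAddMonoidHom, ofFinsupp_symm_single,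
        Finsupp.liftAddHom_apply_single]
      change (AddMonoidAlgebra.single (g + h) 1 : AddMonoidAlgebra R G) • f (r • m) =
        (AddMonoidAlgebra.single g r : AddMonoidAlgebra R G) •
          (AddMonoidAlgebra.single h 1 : AddMonoidAlgebra R G) • f m
      rw [f.map_smul]
      change _ • (AddMonoidAlgebra.single 0 r : AddMonoidAlgebra R G) • f m = _
      simp only [← mul_smul, AddMonoidAlgebra.single_mul_single, add_zero, mul_one, one_mul])

theorem lift_single {N : ModuleCat.{u} (AddMonoidAlgebra R G)}
    (f : M →ₗ[R] (ModuleCat.restrictScalars ι).obj N) (g : G) (m : M) :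
    lift f (single g m) = (AddMonoidAlgebra.single g 1 : AddMonoidAlgebra R G) • f m :=
  Finsupp.liftAddHom_apply_single _ _ _

def map {M' : Type u} [AddCommGroup M'] [Module R M'] (f : M →ₗ[R] M') :
    InducedModule R G M →ₗ[AddMonoidAlgebra R G] InducedModule R G M' :=
  mkLinearMap ((ofFinsupp.toAddMonoidHom.comp (Finsupp.mapRange.addMonoidHom f.toAddMonoidHom)).comp
      ofFinsupp.symm.toAddMonoidHom)
    (fun g r h m => by simp [single_smul_single])

theorem map_single {M' : Type u} [AddCommGroup M'] [Module R M'] (f : M →ₗ[R] M') (g : G)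
    (m : M) : map f (single g m) = single g (f m) := by
  simp [map, mkLinearMap]

variable (R G)

def selfEquiv : InducedModule R G R ≃ₗ[AddMonoidAlgebra R G] AddMonoidAlgebra R G :=
  let e : InducedModule R G R ≃+ AddMonoidAlgebra R G :=
    ofFinsupp.symm.trans AddMonoidAlgebra.coeffAddEquiv.symm
  { e with
    map_smul' := (mkLinearMap (N := AddMonoidAlgebra R G) e.toAddMonoidHom fun g r h m => by
      change AddMonoidAlgebra.single (g + h) (r * m) =
        AddMonoidAlgebra.single g r * AddMonoidAlgebra.single h m
      rw [AddMonoidAlgebra.single_mul_single]).map_smul }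

def functor : ModuleCat.{u} R ⥤ ModuleCat.{u} (AddMonoidAlgebra R G) where
  obj M := .of _ (InducedModule R G M)
  map f := ModuleCat.ofHom (map f.hom)
  map_id M := by ext; simp [map_single]
  map_comp f g := by ext; simp [map_single]

def unit (M : ModuleCat.{u} R) :
    M ⟶ (ModuleCat.restrictScalars ι).obj ((functor R G).obj M) :=
  ModuleCat.ofHom (Y := (ModuleCat.restrictScalars ι).obj (.of _ (InducedModule R G M)))
    { toFun := single 0
      map_add' := single_add 0
      map_smul' r m := by
        change (single 0 (r • m) : InducedModule R G M) =
          (AddMonoidAlgebra.single 0 r : AddMonoidAlgebra R G) • single 0 m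
        rw [single_smul_single, zero_add] }

def adjunction : functor R G ⊣ ModuleCat.restrictScalars.{u} ι :=
  Adjunction.mkOfHomEquiv
    { homEquiv M N :=
        { toFun φ := unit R G M ≫ (ModuleCat.restrictScalars _).map φ
          invFun f := ModuleCat.ofHom (lift f.hom)
          left_inv φ := by
            ext m
            rw [ModuleCat.hom_ofHom, lift_single, ← AddMonoidAlgebra.one_def, one_smul]
            rfl
          right_inv f := by
            ext m
            change lift f.hom (single 0 m) = f m
            rw [lift_single, ← AddMonoidAlgebra.one_def, one_smul] }
      homEquiv_naturality_left_symm f g := by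
        refine ModuleCat.hom_ext (linearMap_ext fun m => ?_)
        change lift (f ≫ g).hom (single 0 m) = lift g.hom (map f.hom (single 0 m))
        rw [map_single, lift_single, lift_single]
        rfl }

instance : PreservesColimits (functor R G) :=
  (adjunction R G).leftAdjoint_preservesColimits

theorem functor_preservesShortExact : PreservesShortExact (functor R G) :=
  fun _ _ _ f g hf hg hfg =>
    ⟨Finsupp.mapRange_injective _ (map_zero f.hom) hf,
      Finsupp.mapRange_surjective _ (map_zero g.hom) hg,
      hfg.finsupp_mapRange (f := f.hom.toAddMonoidHom) (g := g.hom.toAddMonoidHom)⟩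

variable {R G} (N : ModuleCat.{u} (AddMonoidAlgebra R G))

def counit : InducedModule R G ((ModuleCat.restrictScalars ι).obj N) →ₗ[AddMonoidAlgebra R G]
    (ModuleCat.restrictScalars ι).obj N :=
  lift LinearMap.id

theorem counit_single (g : G) (n : (ModuleCat.restrictScalars ι).obj N) :
    counit N (single g n) = (AddMonoidAlgebra.single g 1 : AddMonoidAlgebra R G) • n :=
  lift_single _ _ _

theorem counit_surjective : Surjective (counit N) :=
  fun n => ⟨single 0 n, by rw [counit_single, ← AddMonoidAlgebra.one_def, one_smul]⟩

end InducedModule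

open LaurentPolynomial InducedModule

variable {R : Type u} [Ring R]

local notation "ι" => (AddMonoidAlgebra.singleZeroRingHom : R →+* R[T;T⁻¹])

namespace LaurentPolynomial

def smulT (M : Type u) [AddCommGroup M] [Module R[T;T⁻¹] M] : M →ₗ[R[T;T⁻¹]] M where
  toFun := ((T 1 : R[T;T⁻¹]) • ·)
  map_add' := smul_add _
  map_smul' p x := by rw [RingHom.id_apply, smul_smul, smul_smul, T_mul]

variable (N : ModuleCat.{u} R[T;T⁻¹])

/-- `T ⊗ 1 - 1 ⊗ T` on `R[T;T⁻¹] ⊗_R N`. -/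
def laurentDiff : InducedModule R ℤ ((ModuleCat.restrictScalars ι).obj N) →ₗ[R[T;T⁻¹]]
    InducedModule R ℤ ((ModuleCat.restrictScalars ι).obj N) :=
  smulT _ - map ((ModuleCat.restrictScalars ι).map (ModuleCat.ofHom (smulT N))).hom

theorem laurentDiff_single_zero (n : (ModuleCat.restrictScalars ι).obj N) :
    laurentDiff N (single 0 n) =
      (T 1 : R[T;T⁻¹]) • single 0 n - single 0 ((T 1 : R[T;T⁻¹]) • n) := by
  rw [laurentDiff, LinearMap.sub_apply, map_single]
  rfl

theorem laurentDiff_apply (x : InducedModule R ℤ ((ModuleCat.restrictScalars ι).obj N)) (a : ℤ) :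
    ofFinsupp.symm (laurentDiff N x) a =
      ofFinsupp.symm x (a - 1) - (T 1 : R[T;T⁻¹]) • ofFinsupp.symm x a := by
  rw [laurentDiff, LinearMap.sub_apply, map_sub, Finsupp.sub_apply]
  congr 1
  exact (ofFinsupp_symm_single_one_smul 1 x a).trans (by rw [neg_add_eq_sub])

theorem laurentDiff_injective : Injective (laurentDiff N) := by
  rw [injective_iff_map_eq_zero]
  intro x hx
  by_contra hne
  have hsupp : (ofFinsupp.symm x).support.Nonempty :=
    Finsupp.support_nonempty_iff.2 ((AddEquiv.map_ne_zero_iff _).2 hne)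
  set k := (ofFinsupp.symm x).support.max' hsupp
  -- the coefficient of `laurentDiff N x` in degree `k + 1` is the leading coefficient of `x`
  have hk : ofFinsupp.symm x (k + 1) = 0 :=
    Finsupp.notMem_support_iff.1 fun h => by linarith [(ofFinsupp.symm x).support.le_max' _ h]
  have h := laurentDiff_apply N x (k + 1)
  rw [hx, hk, smul_zero, sub_zero, add_sub_cancel_right] at h
  exact Finsupp.mem_support_iff.1 ((ofFinsupp.symm x).support.max'_mem hsupp) h.symm

theorem counit_comp_laurentDiff : (counit N).comp (laurentDiff N) = 0 :=
  linearMap_ext fun n => by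
    rw [LinearMap.comp_apply, laurentDiff_single_zero, map_sub, map_smul, counit_single,
      counit_single, ← AddMonoidAlgebra.one_def, one_smul, one_smul, sub_self]
    rfl

theorem T_smul_single_sub_single_T_smul_mem_range (j : ℤ)
    (n : (ModuleCat.restrictScalars ι).obj N) :
    (T j : R[T;T⁻¹]) • single 0 n - single 0 ((T j : R[T;T⁻¹]) • n) ∈
      LinearMap.range (laurentDiff N) := by
  -- `D` satisfies the cocycle identity `hD`, which reduces `D (T j)` to `D (T 1)` and `D (T (-1))`.
  let D (p : R[T;T⁻¹]) (n : (ModuleCat.restrictScalars ι).obj N) :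
      InducedModule R ℤ ((ModuleCat.restrictScalars ι).obj N) :=
    p • single 0 n - single 0 (p • n)
  have hD : ∀ p q n, D (p * q) n = p • D q n + D p (q • n) := by
    intro p q n
    simp only [D, mul_smul, smul_sub]
    abel
  have hT : ∀ n, D (T 1) n ∈ LinearMap.range (laurentDiff N) :=
    fun n => ⟨single 0 n, laurentDiff_single_zero N n⟩
  have hTinv : ∀ n, D (T (-1)) n ∈ LinearMap.range (laurentDiff N) := by
    intro n
    have h := hD (T (-1)) (T 1) ((T (-1) : R[T;T⁻¹]) • n)
    rw [← T_add, neg_add_cancel, T_zero, smul_smul, ← T_add, add_neg_cancel, T_zero, one_smul] at h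
    rw [eq_neg_of_add_eq_zero_right (h.symm.trans (by simp [D]))]
    exact neg_mem (Submodule.smul_mem _ _ (hT _))
  change D (T j) n ∈ _
  induction j using Int.induction_on generalizing n with
  | zero => simp [D, T_zero]
  | succ j ih =>
    rw [T_add, hD]
    exact add_mem (Submodule.smul_mem _ _ (hT n)) (ih _)
  | pred j ih =>
    rw [sub_eq_add_neg, T_add, hD]
    exact add_mem (Submodule.smul_mem _ _ (hTinv n)) (ih _)

theorem sub_single_counit_mem_range
    (x : InducedModule R ℤ ((ModuleCat.restrictScalars ι).obj N)) :
    x - single 0 (counit N x) ∈ LinearMap.range (laurentDiff N) := by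
  induction x using induction_on with
  | zero => simp [single]
  | add x y hx hy =>
    convert add_mem hx hy using 1
    rw [sub_add_sub_comm, ← single_add, ← map_add]
  | single j n =>
    rw [counit_single, single_eq_smul]
    exact T_smul_single_sub_single_T_smul_mem_range N j n

theorem exact_laurentDiff_counit : Exact (laurentDiff N) (counit N) := by
  intro x
  constructor
  · intro hx
    simpa [hx, single] using sub_single_counit_mem_range N x
  · rintro ⟨y, rfl⟩
    exact LinearMap.congr_fun (counit_comp_laurentDiff N) y

end LaurentPolynomial

theorem IsVogelRegular.laurentPolynomial (hR : IsVogelRegular R) : IsVogelRegular R[T;T⁻¹] := by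
  intro N 𝒮 h𝒮 hS
  have hInd : ∀ M, (InducedModule.functor R ℤ).obj M ∈ 𝒮 :=
    hR.obj_mem h𝒮 _ (functor_preservesShortExact R ℤ)
      (h𝒮.2.mem_of_linearEquiv (selfEquiv R ℤ).symm hS)
  exact (h𝒮.2 _ _ (.of _ ((ModuleCat.restrictScalars ι).obj N)) (laurentDiff N) (counit N)
    (laurentDiff_injective N) (counit_surjective N) (exact_laurentDiff_counit N)).1
    (hInd _) (hInd _)

theorem IsVogelRegular.addMonoidAlgebra_pi_fin_int (hR : IsVogelRegular R) :
    ∀ n : ℕ, IsVogelRegular (AddMonoidAlgebra R (Fin n → ℤ))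
  | 0 => hR.of_ringEquiv (AddMonoidAlgebra.uniqueRingEquiv _).symm
  | n + 1 =>
    have e : (AddMonoidAlgebra R (Fin n → ℤ))[T;T⁻¹] ≃+* AddMonoidAlgebra R (Fin (n + 1) → ℤ) :=
      AddMonoidAlgebra.curryRingEquiv.symm.trans
        (AddMonoidAlgebra.mapDomainRingEquiv R (Fin.consLinearEquiv ℤ fun _ => ℤ).toAddEquiv)
    (addMonoidAlgebra_pi_fin_int hR n).laurentPolynomial.of_ringEquiv e

end

/-- if `A` is a right regular ring (in the sense of Vogel) and
`n` is a natural number, then the group ring `A[ℤⁿ]` of the free abelian group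
`ℤⁿ` over `A` is right regular. -/
theorem isVogelRightRegular_groupRing_free_abelian
    (A : Type u) [Ring A] (hA : IsVogelRightRegular A) (n : ℕ) :
    IsVogelRightRegular (AddMonoidAlgebra A (Fin n → ℤ)) := by
  have hAn : IsVogelRegular (AddMonoidAlgebra Aᵐᵒᵖ (Fin n → ℤ)) :=
    IsVogelRegular.addMonoidAlgebra_pi_fin_int hA n
  have e : AddMonoidAlgebra Aᵐᵒᵖ (Fin n → ℤ) ≃+* (AddMonoidAlgebra A (Fin n → ℤ))ᵐᵒᵖ :=
    (AddMonoidAlgebra.mapDomainRingEquiv Aᵐᵒᵖ AddOpposite.opAddEquiv).trans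
      AddMonoidAlgebra.opRingEquiv.symm
  exact hAn.of_ringEquiv e
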